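/- Let a_1,…,a_n ∈ ℤ^d have the property that all signed sums Σ ξ_k a_k (ξ ∈ {-1,0,1}^n) are distinct. For q = a_k + Σ_{j<k} ξ_j a_j ∈ A_k let r(q) = #{j : ξ_j ≠ 0} + 1, and set r(−q) = r(q). Then Σ_{k=1}^{n} Σ_{q ∈ A_k ∪ (−A_k)} 2^{−r(q)} e^{i⟨q,x⟩} = −1 + Π_{k=1}^{n}(1 + cos⟨x, a_k⟩) for all x ∈ 𝕋^d. -/
import Mathlib


open MeasureTheory Real Finset

/-- Normalized L¹ norm over the d-torus, realized as the cube `(0, 2π]^d`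
with normalized measure. -/
noncomputable def L1norm {d : ℕ} (f : (Fin d → ℝ) → ℂ) : ℝ :=
  ((2 * π) ^ d)⁻¹ *
    ∫ x in Set.univ.pi (fun _ : Fin d => Set.Ioc (0 : ℝ) (2 * π)), ‖f x‖

/-- Partial derivative in direction `j`. -/
noncomputable def pderiv1 {d : ℕ} (j : Fin d) (f : (Fin d → ℝ) → ℂ) :
    (Fin d → ℝ) → ℂ :=
  fun x => fderiv ℝ f x (Pi.single j 1)

/-- `n`-fold partial derivative in direction `j`. -/
noncomputable def pderivIter {d : ℕ} (j : Fin d) :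
    ℕ → ((Fin d → ℝ) → ℂ) → ((Fin d → ℝ) → ℂ)
  | 0 => id
  | n + 1 => fun f => pderiv1 j (pderivIter j n f)

/-- Mixed partial derivative `D^α`. -/
noncomputable def mderiv {d : ℕ} (α : Fin d → ℕ) (f : (Fin d → ℝ) → ℂ) :
    (Fin d → ℝ) → ℂ :=
  (List.finRange d).foldr (fun j g => pderivIter j (α j) g) f

/-- `f` is a trigonometric polynomial of degree at most `N` on `𝕋^d`. -/
def IsTrigPoly {d : ℕ} (N : ℕ) (f : (Fin d → ℝ) → ℂ) : Prop :=
  ∃ (F : Finset (Fin d → ℤ)) (c : (Fin d → ℤ) → ℂ),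
    (∀ q ∈ F, ∀ j, |q j| ≤ (N : ℤ)) ∧
    f = fun x => ∑ q ∈ F, c q * Complex.exp (Complex.I * ∑ j, (q j : ℂ) * (x j : ℂ))

/-- Signs indexed by `Fin 3`. -/
def sgn3 : Fin 3 → ℤ := ![-1, 0, 1]

private def neg3 : Fin 3 → Fin 3 := ![2, 1, 0]

private lemma sgn3_neg3 : ∀ s, sgn3 (neg3 s) = - sgn3 s := by decide
private lemma neg3_neg3 : ∀ s, neg3 (neg3 s) = s := by decide
private lemma sgn3_eq_zero : ∀ s, sgn3 s = 0 ↔ s = 1 := by decide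
private lemma sgn3_neg3_ne : ∀ s, (sgn3 (neg3 s) ≠ 0) ↔ (sgn3 s ≠ 0) := by decide

private lemma tele {M : Type*} [CommRing M] (n : ℕ) (g : ℕ → M) :
    ∑ k ∈ range n, g k * ∏ j ∈ range k, (1 + g j) = ∏ j ∈ range n, (1 + g j) - 1 := by
  induction n with
  | zero => simp
  | succ m ih => rw [sum_range_succ, prod_range_succ, ih]; ring

private lemma key {n : ℕ} (k : Fin n) (θ : Fin n → ℂ) :
    ∑ ξ ∈ Finset.univ.filter
        (fun ξ : Fin n → Fin 3 => ∀ j, ¬ j < k → sgn3 (ξ j) = 0),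
      ((2 : ℂ) ^
          (-(((Finset.univ.filter (fun j : Fin n => sgn3 (ξ j) ≠ 0)).card + 1 : ℕ) : ℤ)) *
        (Complex.exp (θ k + ∑ l, (sgn3 (ξ l) : ℂ) * θ l) +
         Complex.exp (-(θ k + ∑ l, (sgn3 (ξ l) : ℂ) * θ l))))
    = (Complex.exp (θ k) + Complex.exp (-θ k)) / 2 *
        ∏ j ∈ Finset.univ.filter (fun j : Fin n => j < k),
          (1 + (Complex.exp (θ j) + Complex.exp (-θ j)) / 2) := by
  classical
  set t : Fin n → Finset (Fin 3) := fun j => if j < k then (univ : Finset (Fin 3)) else {1}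
    with ht
  set P : Finset (Fin n → Fin 3) := Fintype.piFinset t with hPdef
  have hP : Finset.univ.filter
      (fun ξ : Fin n → Fin 3 => ∀ j, ¬ j < k → sgn3 (ξ j) = 0) = P := by
    ext ξ
    simp only [hPdef, Fintype.mem_piFinset, mem_filter, mem_univ, true_and, ht]
    refine forall_congr' fun j => ?_
    by_cases hj : j < k <;> simp [hj, sgn3_eq_zero]
  set w : (Fin n → Fin 3) → ℂ :=
    fun ξ => (2 : ℂ)⁻¹ ^ (Finset.univ.filter (fun j : Fin n => sgn3 (ξ j) ≠ 0)).card with hw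
  set L : (Fin n → Fin 3) → ℂ := fun ξ => ∑ l, (sgn3 (ξ l) : ℂ) * θ l with hL
  have hterm : ∀ ξ : Fin n → Fin 3,
      (2 : ℂ) ^
          (-(((Finset.univ.filter (fun j : Fin n => sgn3 (ξ j) ≠ 0)).card + 1 : ℕ) : ℤ)) *
        (Complex.exp (θ k + L ξ) + Complex.exp (-(θ k + L ξ)))
      = (2 : ℂ)⁻¹ * w ξ * (Complex.exp (θ k + L ξ) + Complex.exp (-(θ k + L ξ))) := by
    intro ξ
    rw [zpow_neg, zpow_natCast, ← inv_pow, pow_succ]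
    ring
  rw [hP]
  have hsym : ∑ ξ ∈ P, w ξ * Complex.exp (-(θ k + L ξ))
      = Complex.exp (-θ k) * ∑ ξ ∈ P, w ξ * Complex.exp (L ξ) := by
    rw [Finset.mul_sum]
    refine Finset.sum_nbij' (fun ξ => neg3 ∘ ξ) (fun ξ => neg3 ∘ ξ) ?_ ?_ ?_ ?_ ?_
    · intro ξ hξ
      simp only [hPdef, Fintype.mem_piFinset, ht] at hξ ⊢
      intro j
      by_cases hj : j < k
      · simp [hj]
      · have := hξ j
        simp only [hj, if_false, mem_singleton, Function.comp_apply] at this ⊢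
        rw [this]; decide
    · intro ξ hξ
      simp only [hPdef, Fintype.mem_piFinset, ht] at hξ ⊢
      intro j
      by_cases hj : j < k
      · simp [hj]
      · have := hξ j
        simp only [hj, if_false, mem_singleton, Function.comp_apply] at this ⊢
        rw [this]; decide
    · intro ξ _; funext j; exact neg3_neg3 _
    · intro ξ _; funext j; exact neg3_neg3 _
    · intro ξ _
      have hwn : w (neg3 ∘ ξ) = w ξ := by
        simp only [hw]
        congr 1
        exact congrArg Finset.card (Finset.filter_congr fun j _ => sgn3_neg3_ne (ξ j))
      have hLn : L (neg3 ∘ ξ) = - L ξ := by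
        simp only [hL, ← Finset.sum_neg_distrib]
        refine Finset.sum_congr rfl fun l _ => ?_
        rw [Function.comp_apply, sgn3_neg3]
        push_cast
        ring
      rw [hwn, hLn, neg_add, Complex.exp_add]
      ring
  calc ∑ ξ ∈ P, (2 : ℂ) ^
          (-(((Finset.univ.filter (fun j : Fin n => sgn3 (ξ j) ≠ 0)).card + 1 : ℕ) : ℤ)) *
        (Complex.exp (θ k + L ξ) + Complex.exp (-(θ k + L ξ)))
      = ∑ ξ ∈ P, (Complex.exp (θ k) * ((2:ℂ)⁻¹ * (w ξ * Complex.exp (L ξ))) +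
          (2:ℂ)⁻¹ * (w ξ * Complex.exp (-(θ k + L ξ)))) := by
        refine Finset.sum_congr rfl fun ξ _ => ?_
        rw [hterm ξ, Complex.exp_add]
        ring
    _ = Complex.exp (θ k) * ((2:ℂ)⁻¹ * ∑ ξ ∈ P, w ξ * Complex.exp (L ξ)) +
          (2:ℂ)⁻¹ * ∑ ξ ∈ P, w ξ * Complex.exp (-(θ k + L ξ)) := by
        rw [Finset.sum_add_distrib, ← Finset.mul_sum, ← Finset.mul_sum, ← Finset.mul_sum]
    _ = (2:ℂ)⁻¹ * (Complex.exp (θ k) + Complex.exp (-θ k)) *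
          ∑ ξ ∈ P, w ξ * Complex.exp (L ξ) := by rw [hsym]; ring
    _ = (Complex.exp (θ k) + Complex.exp (-θ k)) / 2 *
        ∏ j ∈ Finset.univ.filter (fun j : Fin n => j < k),
          (1 + (Complex.exp (θ j) + Complex.exp (-θ j)) / 2) := by
        have hps : ∑ ξ ∈ P, w ξ * Complex.exp (L ξ)
            = ∏ j : Fin n, ∑ s ∈ t j,
                ((2:ℂ)⁻¹ ^ (if sgn3 s ≠ 0 then 1 else 0) *
                  Complex.exp ((sgn3 s : ℂ) * θ j)) := by
          rw [Finset.prod_univ_sum]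
          refine Finset.sum_congr rfl fun ξ _ => ?_
          rw [Finset.prod_mul_distrib, Finset.prod_pow_eq_pow_sum, ← Complex.exp_sum]
          congr 2
          · simp [hw, Finset.card_filter]
        rw [hps]
        have hfac : ∀ j : Fin n, (∑ s ∈ t j,
            ((2:ℂ)⁻¹ ^ (if sgn3 s ≠ 0 then 1 else 0) *
              Complex.exp ((sgn3 s : ℂ) * θ j)))
            = if j < k then (1 + (Complex.exp (θ j) + Complex.exp (-θ j)) / 2) else 1 := by
          intro j
          by_cases hj : j < k
          · simp only [ht, hj, if_true, Fin.sum_univ_three]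
            have h0 : sgn3 0 = -1 := rfl
            have h1 : sgn3 1 = 0 := rfl
            have h2 : sgn3 2 = 1 := rfl
            rw [h0, h1, h2]
            norm_num [Complex.exp_zero]
            ring
          · simp only [ht, hj, if_false, Finset.sum_singleton]
            have h1 : sgn3 1 = 0 := rfl
            rw [h1]
            norm_num [Complex.exp_zero]
        calc (2:ℂ)⁻¹ * (Complex.exp (θ k) + Complex.exp (-θ k)) *
              ∏ j : Fin n, (∑ s ∈ t j,
                ((2:ℂ)⁻¹ ^ (if sgn3 s ≠ 0 then 1 else 0) *
                  Complex.exp ((sgn3 s : ℂ) * θ j)))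
            = (2:ℂ)⁻¹ * (Complex.exp (θ k) + Complex.exp (-θ k)) *
              ∏ j : Fin n, (if j < k then
                (1 + (Complex.exp (θ j) + Complex.exp (-θ j)) / 2) else 1) := by
              rw [Finset.prod_congr rfl fun j _ => hfac j]
          _ = (Complex.exp (θ k) + Complex.exp (-θ k)) / 2 *
              ∏ j ∈ Finset.univ.filter (fun j : Fin n => j < k),
                (1 + (Complex.exp (θ j) + Complex.exp (-θ j)) / 2) := by
              rw [← Finset.prod_filter]
              ring

/-- Expansion of the modified Riesz product: since representations are unique,
the sum over `A_k ∪ (-A_k)` is written as a sum over sign patterns supported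
below `k`, with `r(q) = #{j : ξ_j ≠ 0} + 1`. -/
theorem stmt_8 (d n : ℕ) (a : Fin n → Fin d → ℤ)
    (hdist : ∀ ξ ξ' : Fin n → Fin 3,
      (fun i => ∑ k, sgn3 (ξ k) * a k i) = (fun i => ∑ k, sgn3 (ξ' k) * a k i) →
      ξ = ξ') :
    ∀ x : Fin d → ℝ,
      (∑ k : Fin n, ∑ ξ ∈ Finset.univ.filter
          (fun ξ : Fin n → Fin 3 => ∀ j, ¬ j < k → sgn3 (ξ j) = 0),
        ((2 : ℂ) ^
            (-(((Finset.univ.filter (fun j : Fin n => sgn3 (ξ j) ≠ 0)).card + 1 : ℕ)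
              : ℤ)) *
          (Complex.exp (Complex.I *
              ∑ i, ((a k i + ∑ l, sgn3 (ξ l) * a l i : ℤ) : ℂ) * (x i : ℂ)) +
            Complex.exp (-(Complex.I *
              ∑ i, ((a k i + ∑ l, sgn3 (ξ l) * a l i : ℤ) : ℂ) * (x i : ℂ)))))) =
        -1 + ∏ k : Fin n, (1 + (Real.cos (∑ j, (a k j : ℝ) * x j) : ℂ)) := by
  intro x
  set θ : Fin n → ℂ := fun j => Complex.I * ∑ i, ((a j i : ℤ) : ℂ) * (x i : ℂ) with hθ
  have harg : ∀ (k : Fin n) (ξ : Fin n → Fin 3),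
      (Complex.I * ∑ i, ((a k i + ∑ l, sgn3 (ξ l) * a l i : ℤ) : ℂ) * (x i : ℂ))
      = θ k + ∑ l, (sgn3 (ξ l) : ℂ) * θ l := by
    intro k ξ
    simp only [hθ]
    push_cast
    simp only [add_mul, Finset.sum_add_distrib, mul_add, Finset.sum_mul, Finset.mul_sum]
    rw [Finset.sum_comm]
    congr 1
    refine Finset.sum_congr rfl fun l _ => Finset.sum_congr rfl fun i _ => by ring
  have hcos : ∀ k : Fin n, ((Real.cos (∑ j, (a k j : ℝ) * x j) : ℝ) : ℂ)
      = (Complex.exp (θ k) + Complex.exp (-θ k)) / 2 := by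
    intro k
    rw [Complex.ofReal_cos]
    rw [show ((∑ j, (a k j : ℝ) * x j : ℝ) : ℂ) = ∑ i, ((a k i : ℤ) : ℂ) * (x i : ℂ) by
      push_cast; rfl]
    simp [hθ, Complex.cos, mul_comm]
  simp only [harg, hcos]
  set c : Fin n → ℂ := fun j => (Complex.exp (θ j) + Complex.exp (-θ j)) / 2 with hc
  have hkey : ∀ k : Fin n,
      (∑ ξ ∈ Finset.univ.filter
          (fun ξ : Fin n → Fin 3 => ∀ j, ¬ j < k → sgn3 (ξ j) = 0),
        ((2 : ℂ) ^
            (-(((Finset.univ.filter (fun j : Fin n => sgn3 (ξ j) ≠ 0)).card + 1 : ℕ)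
              : ℤ)) *
          (Complex.exp (θ k + ∑ l, (sgn3 (ξ l) : ℂ) * θ l) +
            Complex.exp (-(θ k + ∑ l, (sgn3 (ξ l) : ℂ) * θ l)))))
      = c k * ∏ j ∈ Finset.univ.filter (fun j : Fin n => j < k), (1 + c j) :=
    fun k => key k θ
  rw [Finset.sum_congr rfl fun k _ => hkey k]
  classical
  set g : ℕ → ℂ := fun m => if h : m < n then c ⟨m, h⟩ else 0 with hgdef
  have hg : ∀ j : Fin n, g j.1 = c j := fun j => by simp [hgdef, j.2]
  have hfil : ∀ k : Fin n,
      ∏ j ∈ Finset.univ.filter (fun j : Fin n => j < k), (1 + c j)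
      = ∏ m ∈ Finset.range k.1, (1 + g m) := by
    intro k
    have h1 : Finset.univ.filter (fun j : Fin n => j < k) = Finset.Iio k := by ext j; simp
    rw [h1, ← Nat.Iio_eq_range, ← Fin.map_valEmbedding_Iio, Finset.prod_map]
    exact Finset.prod_congr rfl fun j _ => by rw [Fin.valEmbedding_apply, hg]
  calc ∑ k : Fin n, c k * ∏ j ∈ Finset.univ.filter (fun j : Fin n => j < k), (1 + c j)
      = ∑ k : Fin n, g k.1 * ∏ m ∈ Finset.range k.1, (1 + g m) := by
        exact Finset.sum_congr rfl fun k _ => by rw [hfil, hg]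
    _ = ∑ k ∈ Finset.range n, g k * ∏ m ∈ Finset.range k, (1 + g m) :=
        Fin.sum_univ_eq_sum_range (fun m => g m * ∏ j ∈ Finset.range m, (1 + g j)) n
    _ = ∏ m ∈ Finset.range n, (1 + g m) - 1 := tele n g
    _ = -1 + ∏ k : Fin n, (1 + c k) := by
        rw [← Fin.prod_univ_eq_prod_range (fun m => 1 + g m) n]
        rw [Finset.prod_congr rfl fun k (_ : k ∈ Finset.univ) => by rw [hg]]
        ring
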